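/- arXiv:1202.0533 — 8 statements merged into one kernel-verified Lean document; each statement's English description precedes it below -/
import Mathlib

section
/- (Helstrom lower bound.) Let ψ₀ and ψ₁ be unit vectors in ℂ^d. For every Hermitian operator M on ℂ^d with 0 ≤ M ≤ I (both M and I - M positive semidefinite), the equal-prior error probability ½⟨ψ₀, (I - M)ψ₀⟩ + ½⟨ψ₁, M ψ₁⟩ is at least ½(1 - √(1 - |⟨ψ₀, ψ₁⟩|²)). -/
/-!
With `a = ⟨ψ₀, M ψ₀⟩` and `b = ⟨ψ₁, M ψ₁⟩` the error probability is `½ (1 - (a - b))`.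
Splitting `⟨ψ₀, ψ₁⟩ = ⟨ψ₀, M ψ₁⟩ + ⟨ψ₀, (I - M) ψ₁⟩` and applying Cauchy–Schwarz to the
semi-inner products defined by `M` and `I - M` bounds `|⟨ψ₀, ψ₁⟩|` by the fidelity
`√(ab) + √((1 - a)(1 - b))` of the two outcome distributions. For Bernoulli distributions
`(a - b)² + F² ≤ 1`, hence `a - b ≤ √(1 - |⟨ψ₀, ψ₁⟩|²)`.
-/

open Matrix
open scoped ComplexOrder

noncomputable def bernoulliFidelity (a b : ℝ) : ℝ := √a * √b + √(1 - a) * √(1 - b)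

theorem sq_sub_add_bernoulliFidelity_sq_le_one {a b : ℝ} (ha₀ : 0 ≤ a) (ha₁ : a ≤ 1)
    (hb₀ : 0 ≤ b) (hb₁ : b ≤ 1) : (a - b) ^ 2 + bernoulliFidelity a b ^ 2 ≤ 1 := by
  obtain ⟨s, hs, rfl⟩ : ∃ s, 0 ≤ s ∧ s ^ 2 = a := ⟨√a, Real.sqrt_nonneg a, Real.sq_sqrt ha₀⟩
  obtain ⟨t, ht, rfl⟩ : ∃ t, 0 ≤ t ∧ t ^ 2 = b := ⟨√b, Real.sqrt_nonneg b, Real.sq_sqrt hb₀⟩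
  set u := √(1 - s ^ 2)
  set v := √(1 - t ^ 2)
  have hu : u ^ 2 = 1 - s ^ 2 := Real.sq_sqrt (by linarith)
  have hv : v ^ 2 = 1 - t ^ 2 := Real.sq_sqrt (by linarith)
  have hF : bernoulliFidelity (s ^ 2) (t ^ 2) = s * t + u * v := by
    rw [bernoulliFidelity, Real.sqrt_sq hs, Real.sqrt_sq ht]
  have hLagrange : (s * t + u * v) ^ 2 + (s * v - t * u) ^ 2 = 1 := by
    linear_combination (s ^ 2 + u ^ 2) * hv + hu
  have hdiff : s ^ 2 - t ^ 2 = (s * v - t * u) * (s * v + t * u) := by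
    linear_combination t ^ 2 * hu - s ^ 2 * hv
  have hsum : (s * v + t * u) ^ 2 ≤ 1 := by
    nlinarith [sq_nonneg (s * t - u * v)]
  rw [hF, hdiff, mul_pow]
  nlinarith [sq_nonneg (s * v - t * u)]

namespace Matrix

variable {𝕜 n : Type*} [RCLike 𝕜] [Fintype n]

theorem PosSemidef.norm_dotProduct_mulVec_le {A : Matrix n n 𝕜} (hA : A.PosSemidef)
    (x y : n → 𝕜) :
    ‖star x ⬝ᵥ (A *ᵥ y)‖ ≤
      √(RCLike.re (star x ⬝ᵥ (A *ᵥ x))) * √(RCLike.re (star y ⬝ᵥ (A *ᵥ y))) := by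
  have hCS := @inner_mul_inner_self_le 𝕜 _ _ (A.toSeminormedAddCommGroup hA)
    (A.toInnerProductSpace hA) x y
  change ‖A *ᵥ y ⬝ᵥ star x‖ * ‖A *ᵥ x ⬝ᵥ star y‖ ≤
    RCLike.re (A *ᵥ x ⬝ᵥ star x) * RCLike.re (A *ᵥ y ⬝ᵥ star y) at hCS
  simp only [dotProduct_comm _ (star _)] at hCS
  have hswap : ‖star y ⬝ᵥ (A *ᵥ x)‖ = ‖star x ⬝ᵥ (A *ᵥ y)‖ := by
    rw [← RCLike.norm_conj, RCLike.star_def.symm, star_dotProduct, star_star, star_mulVec,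
      hA.isHermitian.eq, dotProduct_mulVec, dotProduct_comm]
  rw [hswap] at hCS
  rw [← Real.sqrt_mul (hA.re_dotProduct_nonneg x), ← Real.sqrt_mul_self (norm_nonneg _)]
  exact Real.sqrt_le_sqrt hCS

theorem re_dotProduct_one_sub_mulVec [DecidableEq n] (M : Matrix n n 𝕜) (x : n → 𝕜) :
    RCLike.re (star x ⬝ᵥ ((1 - M) *ᵥ x)) =
      RCLike.re (star x ⬝ᵥ x) - RCLike.re (star x ⬝ᵥ (M *ᵥ x)) := by
  rw [sub_mulVec, one_mulVec, dotProduct_sub, map_sub]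

theorem norm_dotProduct_le_bernoulliFidelity [DecidableEq n] {M : Matrix n n 𝕜}
    (hM : M.PosSemidef) (hM' : (1 - M).PosSemidef)
    {x y : n → 𝕜} (hx : star x ⬝ᵥ x = 1) (hy : star y ⬝ᵥ y = 1) :
    ‖star x ⬝ᵥ y‖ ≤
      bernoulliFidelity (RCLike.re (star x ⬝ᵥ (M *ᵥ x))) (RCLike.re (star y ⬝ᵥ (M *ᵥ y))) := by
  have hsplit : star x ⬝ᵥ y = star x ⬝ᵥ (M *ᵥ y) + star x ⬝ᵥ ((1 - M) *ᵥ y) := by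
    rw [← dotProduct_add, ← add_mulVec, add_sub_cancel, one_mulVec]
  have hM'x := re_dotProduct_one_sub_mulVec M x
  have hM'y := re_dotProduct_one_sub_mulVec M y
  rw [hx, RCLike.one_re] at hM'x
  rw [hy, RCLike.one_re] at hM'y
  calc ‖star x ⬝ᵥ y‖
      ≤ ‖star x ⬝ᵥ (M *ᵥ y)‖ + ‖star x ⬝ᵥ ((1 - M) *ᵥ y)‖ := hsplit ▸ norm_add_le _ _
    _ ≤ _ := by
      rw [bernoulliFidelity, ← hM'x, ← hM'y]
      exact add_le_add (hM.norm_dotProduct_mulVec_le x y) (hM'.norm_dotProduct_mulVec_le x y)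

end Matrix

/-- Helstrom lower bound: any measurement `0 ≤ M ≤ I` discriminating two equiprobable pure
states `ψ₀, ψ₁` has average error probability at least `½(1 - √(1 - |⟨ψ₀,ψ₁⟩|²))`. -/
theorem helstrom_lower_bound
    (d : ℕ) (ψ₀ ψ₁ : Fin d → ℂ)
    (h0 : star ψ₀ ⬝ᵥ ψ₀ = 1) (h1 : star ψ₁ ⬝ᵥ ψ₁ = 1)
    (M : Matrix (Fin d) (Fin d) ℂ)
    (hM : M.PosSemidef) (hM' : (1 - M).PosSemidef) :
    (1 / 2) * (1 - Real.sqrt (1 - ‖star ψ₀ ⬝ᵥ ψ₁‖ ^ 2))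
      ≤ (1 / 2) * (star ψ₀ ⬝ᵥ ((1 - M) *ᵥ ψ₀)).re
        + (1 / 2) * (star ψ₁ ⬝ᵥ (M *ᵥ ψ₁)).re := by
  set a := (star ψ₀ ⬝ᵥ (M *ᵥ ψ₀)).re
  set b := (star ψ₁ ⬝ᵥ (M *ᵥ ψ₁)).re
  have herr₀ : (star ψ₀ ⬝ᵥ ((1 - M) *ᵥ ψ₀)).re = 1 - a := by
    simpa [h0] using re_dotProduct_one_sub_mulVec M ψ₀
  have herr₁ : (star ψ₁ ⬝ᵥ ((1 - M) *ᵥ ψ₁)).re = 1 - b := by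
    simpa [h1] using re_dotProduct_one_sub_mulVec M ψ₁
  have ha₀ : 0 ≤ a := hM.re_dotProduct_nonneg ψ₀
  have hb₀ : 0 ≤ b := hM.re_dotProduct_nonneg ψ₁
  have ha₁ : a ≤ 1 := sub_nonneg.mp (herr₀ ▸ hM'.re_dotProduct_nonneg ψ₀)
  have hb₁ : b ≤ 1 := sub_nonneg.mp (herr₁ ▸ hM'.re_dotProduct_nonneg ψ₁)
  have hfid : ‖star ψ₀ ⬝ᵥ ψ₁‖ ≤ bernoulliFidelity a b :=
    norm_dotProduct_le_bernoulliFidelity hM hM' h0 h1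
  have hsq : (a - b) ^ 2 ≤ 1 - ‖star ψ₀ ⬝ᵥ ψ₁‖ ^ 2 := by
    linarith [sq_sub_add_bernoulliFidelity_sq_le_one ha₀ ha₁ hb₀ hb₁,
      pow_le_pow_left₀ (norm_nonneg _) hfid 2]
  rw [herr₀]
  linarith [(le_abs_self (a - b)).trans (Real.abs_le_sqrt hsq)]
end

section
/- (Helstrom achievability.) Let ψ₀ and ψ₁ be unit vectors in ℂ^d. There exists an orthogonal projection M on ℂ^d (M Hermitian with M² = M) such that ½⟨ψ₀, (I - M)ψ₀⟩ + ½⟨ψ₁, M ψ₁⟩ = ½(1 - √(1 - |⟨ψ₀, ψ₁⟩|²)). Hence the minimum error probability for equal-prior discrimination of two pure states equals [1 - √(1 - |⟨ψ₀, ψ₁⟩|²)]/2. -/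
/-! Measure with the projection onto `v = (1 + t) ψ₀ - c̄ ψ₁`, where `c = ⟨ψ₀, ψ₁⟩` and
`t = √(1 - |c|²)`. Then `⟨ψ₀, v⟩ = t (1 + t)`, `⟨ψ₁, v⟩ = t c̄` and `‖v‖² = 2 t² (1 + t)`, so the
projection has expectation `(1 + t) / 2` in `ψ₀` and `(1 - t) / 2` in `ψ₁`, which gives error
`(1 - t) / 2`. The vector `v` vanishes when `t = 0`; then `M = 0` already has error `1 / 2`. -/

open Matrix

namespace Matrix

variable {n K : Type*} [Fintype n] [Field K] [StarRing K]

noncomputable def rankOneProjection (v : n → K) : Matrix n n K :=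
  (star v ⬝ᵥ v)⁻¹ • vecMulVec v (star v)

theorem rankOneProjection_isHermitian (v : n → K) : (rankOneProjection v).IsHermitian := by
  rw [rankOneProjection, IsHermitian, conjTranspose_smul, conjTranspose_vecMulVec, star_inv₀,
    ← star_dotProduct_star, star_star]

theorem rankOneProjection_mul_self {v : n → K} (hv : star v ⬝ᵥ v ≠ 0) :
    rankOneProjection v * rankOneProjection v = rankOneProjection v := by
  rw [rankOneProjection, smul_mul_smul_comm, vecMulVec_mul_vecMulVec, vecMulVec_smul, smul_smul,
    mul_assoc, inv_mul_cancel₀ hv, mul_one]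

theorem dotProduct_rankOneProjection_mulVec (v x : n → K) :
    star x ⬝ᵥ (rankOneProjection v *ᵥ x) =
      (star x ⬝ᵥ v) * star (star x ⬝ᵥ v) / (star v ⬝ᵥ v) := by
  rw [rankOneProjection, smul_mulVec, vecMulVec_mulVec, dotProduct_smul, dotProduct_smul,
    star_dotProduct v x]
  simp only [MulOpposite.smul_eq_mul_unop, MulOpposite.unop_op, smul_eq_mul]
  ring

end Matrix

section Helstrom

variable {n : Type*} [Fintype n] {ψ₀ ψ₁ : n → ℂ} {t : ℝ}

/-- For `t = √(1 - |⟨ψ₀, ψ₁⟩|²)` this is an eigenvector of `ψ₀ ψ₀ᴴ - ψ₁ ψ₁ᴴ` for its positive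
eigenvalue `t`. -/
noncomputable def helstromVector (ψ₀ ψ₁ : n → ℂ) (t : ℝ) : n → ℂ :=
  ((1 + t : ℝ) : ℂ) • ψ₀ - star (star ψ₀ ⬝ᵥ ψ₁) • ψ₁

theorem dotProduct_helstromVector (x : n → ℂ) :
    star x ⬝ᵥ helstromVector ψ₀ ψ₁ t =
      (1 + t) * (star x ⬝ᵥ ψ₀) - star (star ψ₀ ⬝ᵥ ψ₁) * (star x ⬝ᵥ ψ₁) := by
  simp only [helstromVector, dotProduct_sub, dotProduct_smul, smul_eq_mul, Complex.ofReal_add,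
    Complex.ofReal_one]

theorem Complex.mul_star_eq_one_sub_sq {z : ℂ} (ht : t ^ 2 = 1 - ‖z‖ ^ 2) :
    z * star z = 1 - t ^ 2 := by
  rw [Complex.star_def, Complex.mul_conj']
  exact_mod_cast (by linarith : ‖z‖ ^ 2 = 1 - t ^ 2)

variable (h0 : star ψ₀ ⬝ᵥ ψ₀ = 1) (h1 : star ψ₁ ⬝ᵥ ψ₁ = 1)
  (ht : t ^ 2 = 1 - ‖star ψ₀ ⬝ᵥ ψ₁‖ ^ 2)

include h0 ht in
theorem dotProduct_helstromVector_left :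
    star ψ₀ ⬝ᵥ helstromVector ψ₀ ψ₁ t = t * (1 + t) := by
  rw [dotProduct_helstromVector, h0, mul_comm (star (star ψ₀ ⬝ᵥ ψ₁)),
    Complex.mul_star_eq_one_sub_sq ht]
  ring

include h1 in
theorem dotProduct_helstromVector_right :
    star ψ₁ ⬝ᵥ helstromVector ψ₀ ψ₁ t = t * star (star ψ₀ ⬝ᵥ ψ₁) := by
  rw [dotProduct_helstromVector, h1, star_dotProduct ψ₁ ψ₀]
  ring

include h0 h1 ht in
theorem dotProduct_helstromVector_self :
    star (helstromVector ψ₀ ψ₁ t) ⬝ᵥ helstromVector ψ₀ ψ₁ t = 2 * t ^ 2 * (1 + t) := by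
  rw [dotProduct_helstromVector, star_dotProduct (helstromVector ψ₀ ψ₁ t) ψ₀,
    star_dotProduct (helstromVector ψ₀ ψ₁ t) ψ₁,
    dotProduct_helstromVector_left h0 ht, dotProduct_helstromVector_right h1]
  have hc := Complex.mul_star_eq_one_sub_sq ht
  simp only [star_mul', star_add, star_one, Complex.star_def, Complex.conj_ofReal,
    Complex.conj_conj] at hc ⊢
  linear_combination -(t : ℂ) * hc

include h0 h1 ht in
theorem dotProduct_rankOneProjection_helstromVector_mulVec_left (ht0 : 0 < t) :
    star ψ₀ ⬝ᵥ (rankOneProjection (helstromVector ψ₀ ψ₁ t) *ᵥ ψ₀) = ((1 + t) / 2 : ℝ) := by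
  rw [dotProduct_rankOneProjection_mulVec, dotProduct_helstromVector_left h0 ht,
    dotProduct_helstromVector_self h0 h1 ht]
  simp only [star_mul', star_add, star_one, Complex.star_def, Complex.conj_ofReal]
  have : (t : ℂ) ≠ 0 := by exact_mod_cast ht0.ne'
  have : (1 + t : ℂ) ≠ 0 := by exact_mod_cast (by linarith : 1 + t ≠ 0)
  push_cast
  field_simp

include h0 h1 ht in
theorem dotProduct_rankOneProjection_helstromVector_mulVec_right (ht0 : 0 < t) :
    star ψ₁ ⬝ᵥ (rankOneProjection (helstromVector ψ₀ ψ₁ t) *ᵥ ψ₁) = ((1 - t) / 2 : ℝ) := by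
  rw [dotProduct_rankOneProjection_mulVec, dotProduct_helstromVector_right h1,
    dotProduct_helstromVector_self h0 h1 ht]
  have hc := Complex.mul_star_eq_one_sub_sq ht
  simp only [star_mul', Complex.star_def, Complex.conj_ofReal, Complex.conj_conj] at hc ⊢
  have : (t : ℂ) ≠ 0 := by exact_mod_cast ht0.ne'
  have : (1 + t : ℂ) ≠ 0 := by exact_mod_cast (by linarith : 1 + t ≠ 0)
  push_cast
  field_simp
  linear_combination hc

end Helstrom

/-- Helstrom achievability: there is an orthogonal projection `M` achieving average error
probability `½(1 - √(1 - |⟨ψ₀,ψ₁⟩|²))` for equiprobable pure states `ψ₀, ψ₁`. -/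
theorem helstrom_achievability
    (d : ℕ) (ψ₀ ψ₁ : Fin d → ℂ)
    (h0 : star ψ₀ ⬝ᵥ ψ₀ = 1) (h1 : star ψ₁ ⬝ᵥ ψ₁ = 1) :
    ∃ M : Matrix (Fin d) (Fin d) ℂ, M.IsHermitian ∧ M * M = M ∧
      (1 / 2) * (star ψ₀ ⬝ᵥ ((1 - M) *ᵥ ψ₀)).re
        + (1 / 2) * (star ψ₁ ⬝ᵥ (M *ᵥ ψ₁)).re
      = (1 / 2) * (1 - Real.sqrt (1 - ‖star ψ₀ ⬝ᵥ ψ₁‖ ^ 2)) := by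
  obtain ht0 | ht0 := (Real.sqrt_nonneg (1 - ‖star ψ₀ ⬝ᵥ ψ₁‖ ^ 2)).eq_or_lt
  · refine ⟨0, isHermitian_zero, mul_zero 0, ?_⟩
    simp [← ht0, h0]
  set t := Real.sqrt (1 - ‖star ψ₀ ⬝ᵥ ψ₁‖ ^ 2)
  have ht : t ^ 2 = 1 - ‖star ψ₀ ⬝ᵥ ψ₁‖ ^ 2 := Real.sq_sqrt (Real.sqrt_pos.1 ht0).le
  refine ⟨rankOneProjection (helstromVector ψ₀ ψ₁ t), rankOneProjection_isHermitian _,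
    rankOneProjection_mul_self ?_, ?_⟩
  · rw [dotProduct_helstromVector_self h0 h1 ht]
    exact_mod_cast (by positivity : 2 * t ^ 2 * (1 + t) ≠ 0)
  · rw [sub_mulVec, one_mulVec, dotProduct_sub, h0,
      dotProduct_rankOneProjection_helstromVector_mulVec_left h0 h1 ht ht0,
      dotProduct_rankOneProjection_helstromVector_mulVec_right h0 h1 ht ht0, Complex.sub_re,
      Complex.one_re, Complex.ofReal_re, Complex.ofReal_re]
    ring
end

section
/- (Sen's non-commutative union bound.) Let ρ be a positive semidefinite d×d complex matrix with trace 1, and let Π₁, Π₂, …, Π_N be orthogonal projections on ℂ^d (Hermitian matrices with Π_i² = Π_i). Then 1 - tr(Π_N ⋯ Π₂ Π₁ ρ Π₁ Π₂ ⋯ Π_N) ≤ 2 √( Σ_{i=1}^N tr((I - Π_i) ρ) ). -/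
/-!
Give matrices the seminorm `‖X‖² = re tr(X ρ Xᴴ)` of `Matrix.toMatrixInnerProductSpace ρ`.
Then `‖1‖ = 1`, `‖P‖² = re tr(P ρ Pᴴ)`, `‖1 - Πᵢ‖² = re tr((1 - Πᵢ) ρ)`, and left multiplication
by each `Πᵢ` is an orthogonal projection. For orthogonal projections `pᵢ`, the decomposition
`v - p_N ⋯ p₁ v = (v - p_N v) + p_N (v - p_{N-1} ⋯ p₁ v)` is orthogonal and `p_N` is a contraction,
so by induction `‖v - p_N ⋯ p₁ v‖² ≤ ∑ ‖v - pᵢ v‖²`. Finally `1 - ‖w‖² ≤ 2 ‖v - w‖` for `‖v‖ = 1`.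
-/

open Matrix
open scoped ComplexOrder InnerProductSpace

namespace LinearMap.IsSymmetricProjection

variable {𝕜 E : Type*} [RCLike 𝕜] [SeminormedAddCommGroup E] [InnerProductSpace 𝕜 E]
  {p : E →ₗ[𝕜] E}

theorem inner_sub_apply_map_eq_zero (hp : p.IsSymmetricProjection) (x y : E) :
    ⟪x - p x, p y⟫_𝕜 = 0 := by
  rw [← hp.isSymmetric, map_sub, ← Module.End.mul_apply, hp.isIdempotentElem.eq, sub_self,
    inner_zero_left]

theorem norm_apply_sq_add_norm_sub_apply_sq (hp : p.IsSymmetricProjection) (x : E) :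
    ‖p x‖ ^ 2 + ‖x - p x‖ ^ 2 = ‖x‖ ^ 2 := by
  have horth : ⟪p x, x - p x⟫_𝕜 = 0 := by
    rw [← inner_conj_symm, hp.inner_sub_apply_map_eq_zero, map_zero]
  simpa [horth] using (norm_add_sq (𝕜 := 𝕜) (p x) (x - p x)).symm

theorem norm_apply_le (hp : p.IsSymmetricProjection) (x : E) : ‖p x‖ ≤ ‖x‖ :=
  pow_le_pow_iff_left₀ (norm_nonneg _) (norm_nonneg _) two_ne_zero |>.mp <| by
    nlinarith [hp.norm_apply_sq_add_norm_sub_apply_sq x, sq_nonneg ‖x - p x‖]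

end LinearMap.IsSymmetricProjection

theorem norm_sub_list_prod_apply_sq_le {𝕜 E : Type*} [RCLike 𝕜] [SeminormedAddCommGroup E]
    [InnerProductSpace 𝕜 E] (L : List (E →ₗ[𝕜] E)) (hL : ∀ p ∈ L, p.IsSymmetricProjection)
    (v : E) : ‖v - L.prod v‖ ^ 2 ≤ (L.map fun p => ‖v - p v‖ ^ 2).sum := by
  induction L with
  | nil => simp
  | cons p L ih =>
    have hp := hL p List.mem_cons_self
    have hsplit : v - (p :: L).prod v = (v - p v) + p (v - L.prod v) := by
      rw [List.prod_cons, Module.End.mul_apply, map_sub]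
      abel
    have hpyth : ‖v - (p :: L).prod v‖ ^ 2 = ‖v - p v‖ ^ 2 + ‖p (v - L.prod v)‖ ^ 2 := by
      rw [hsplit, norm_add_sq (𝕜 := 𝕜), hp.inner_sub_apply_map_eq_zero, map_zero, mul_zero,
        add_zero]
    have hcontract := pow_le_pow_left₀ (norm_nonneg _) (hp.norm_apply_le (v - L.prod v)) 2
    have hL' := ih fun q hq => hL q (List.mem_cons_of_mem p hq)
    rw [hpyth, List.map_cons, List.sum_cons]
    linarith

theorem one_sub_norm_sq_le_two_mul_norm_sub {E : Type*} [SeminormedAddCommGroup E] {v : E}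
    (hv : ‖v‖ = 1) (w : E) : 1 - ‖w‖ ^ 2 ≤ 2 * ‖v - w‖ := by
  nlinarith [norm_sub_norm_le v w, norm_nonneg w, norm_nonneg (v - w)]

namespace Matrix

variable {𝕜 n : Type*} [RCLike 𝕜] [Fintype n] {M Q : Matrix n n 𝕜}

theorem norm_sq_eq_re_trace (hM : M.PosSemidef) (x : Matrix n n 𝕜) :
    letI := M.toMatrixSeminormedAddCommGroup hM
    letI := M.toMatrixInnerProductSpace hM
    ‖x‖ ^ 2 = RCLike.re (x * M * xᴴ).trace := by
  let := M.toMatrixSeminormedAddCommGroup hM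
  let := M.toMatrixInnerProductSpace hM
  rw [← inner_self_eq_norm_sq (𝕜 := 𝕜)]
  rfl

theorem norm_one_sub_sq_eq_re_trace [DecidableEq n] (hM : M.PosSemidef) (hQ : Q.IsHermitian)
    (hQ' : IsIdempotentElem Q) :
    letI := M.toMatrixSeminormedAddCommGroup hM
    ‖1 - Q‖ ^ 2 = RCLike.re ((1 - Q) * M).trace := by
  have hQc : (1 - Q)ᴴ = 1 - Q := (isHermitian_one.sub hQ).eq
  rw [norm_sq_eq_re_trace hM, trace_mul_comm, ← mul_assoc, hQc, hQ'.one_sub.eq]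

theorem isSymmetricProjection_mulLeft (hM : M.PosSemidef) (hQ : Q.IsHermitian)
    (hQ' : IsIdempotentElem Q) :
    letI := M.toMatrixSeminormedAddCommGroup hM
    letI := M.toMatrixInnerProductSpace hM
    (LinearMap.mulLeft 𝕜 Q).IsSymmetricProjection := by
  let := M.toMatrixSeminormedAddCommGroup hM
  let := M.toMatrixInnerProductSpace hM
  refine ⟨?_, fun x y => ?_⟩
  · rw [IsIdempotentElem, Module.End.mul_eq_comp, ← LinearMap.mulLeft_mul, hQ'.eq]
  · change (y * M * (Q * x)ᴴ).trace = (Q * y * M * xᴴ).trace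
    rw [conjTranspose_mul, hQ.eq, ← mul_assoc, trace_mul_comm]
    simp only [mul_assoc]

end Matrix

/-- Sen's non-commutative union bound: for a density matrix `ρ` and orthogonal projections
`Proj₁, …, Proj_N`, `1 - tr(Proj_N ⋯ Proj₁ ρ Proj₁ ⋯ Proj_N) ≤ 2 √(Σ_i tr((I - Proj_i) ρ))`. -/
theorem sen_noncommutative_union_bound
    (d N : ℕ) (ρ : Matrix (Fin d) (Fin d) ℂ)
    (hρ : ρ.PosSemidef) (hτ : ρ.trace = 1)
    (Proj : Fin N → Matrix (Fin d) (Fin d) ℂ)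
    (hherm : ∀ i, (Proj i).IsHermitian) (hproj : ∀ i, Proj i * Proj i = Proj i)
    (P : Matrix (Fin d) (Fin d) ℂ)
    (hP : P = ((List.ofFn Proj).reverse).prod) :
    1 - ((P * ρ * Pᴴ).trace).re
      ≤ 2 * Real.sqrt (∑ i, (((1 - Proj i) * ρ).trace).re) := by
  let := ρ.toMatrixSeminormedAddCommGroup hρ
  let := ρ.toMatrixInnerProductSpace hρ
  have hnorm_one : ‖(1 : Matrix (Fin d) (Fin d) ℂ)‖ = 1 := by
    rw [← pow_eq_one_iff_of_nonneg (norm_nonneg _) two_ne_zero, norm_sq_eq_re_trace hρ]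
    simp [hτ]
  let L := (List.ofFn Proj).reverse.map (Algebra.lmul ℂ (Matrix (Fin d) (Fin d) ℂ))
  have hL : ∀ p ∈ L, p.IsSymmetricProjection := by
    simp only [L, List.mem_map, List.mem_reverse, List.mem_ofFn, forall_exists_index, and_imp]
    rintro _ _ i rfl rfl
    exact isSymmetricProjection_mulLeft hρ (hherm i) (hproj i)
  have hLP : L.prod 1 = P := by
    rw [← map_list_prod, Algebra.coe_lmul_eq_mul, LinearMap.mul_apply', mul_one, hP]
  have hsum : (L.map fun p => ‖1 - p 1‖ ^ 2).sum = ∑ i, (((1 - Proj i) * ρ).trace).re := by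
    simp only [L, List.map_reverse, List.sum_reverse, List.map_ofFn, List.sum_ofFn,
      Function.comp_apply, Algebra.coe_lmul_eq_mul, LinearMap.mul_apply', mul_one]
    exact Finset.sum_congr rfl fun i _ => norm_one_sub_sq_eq_re_trace hρ (hherm i) (hproj i)
  have hunion : ‖1 - P‖ ^ 2 ≤ ∑ i, (((1 - Proj i) * ρ).trace).re :=
    hLP ▸ hsum ▸ norm_sub_list_prod_apply_sq_le L hL 1
  calc 1 - ((P * ρ * Pᴴ).trace).re = 1 - ‖P‖ ^ 2 := by rw [norm_sq_eq_re_trace hρ P]; rfl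
    _ ≤ 2 * ‖1 - P‖ := one_sub_norm_sq_le_two_mul_norm_sub hnorm_one P
    _ ≤ 2 * Real.sqrt (∑ i, (((1 - Proj i) * ρ).trace).re) := by
      gcongr
      exact Real.le_sqrt_of_sq_le hunion
end

section
/- (Gentle measurement lemma.) Let ρ be a positive semidefinite d×d complex matrix with trace 1, let Λ be a Hermitian d×d matrix with 0 ≤ Λ ≤ I, and suppose tr(Λ ρ) ≥ 1 - ε for some ε ∈ [0, 1]. Then the trace norm of the Hermitian matrix ρ - √Λ ρ √Λ, i.e. the sum of the absolute values of its eigenvalues, is at most 2√ε. -/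
/-!
Write `S = √Λ` and let `C` be the unitary sign matrix of `A = ρ - SρS`, so that the trace norm of
`A` is `tr (C A)`. Splitting `ρ - SρS = ρ(1 - S) + (1 - S)ρS` and applying Cauchy–Schwarz for the
inner product `⟨X, Y⟩ = tr (Y ρ Xᴴ)` bounds each term by `√(tr ((1 - S)² ρ))`. Finally
`0 ≤ Λ ≤ 1` gives `Λ ≤ √Λ`, hence `(1 - S)² ≤ 1 - Λ` and `tr ((1 - S)² ρ) ≤ 1 - tr (Λ ρ) ≤ ε`.
-/

open Matrix
open scoped ComplexOrder

/-- The positive semidefinite square root of a positive semidefinite matrix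
(the definition `Matrix.PosSemidef.sqrt` of the older Mathlib, removed since). -/
noncomputable def Matrix.PosSemidef.sqrt {n : Type*} [Fintype n] [DecidableEq n]
    {𝕜 : Type*} [RCLike 𝕜] {A : Matrix n n 𝕜} (hA : A.PosSemidef) : Matrix n n 𝕜 :=
  hA.1.eigenvectorUnitary.1 * diagonal ((↑) ∘ (√·) ∘ hA.1.eigenvalues) *
  (star hA.1.eigenvectorUnitary : Matrix n n 𝕜)

open scoped MatrixOrder

section CFC

variable {A : Type*} [Ring A] [StarRing A] [PartialOrder A] [StarOrderedRing A]
  [TopologicalSpace A] [Algebra ℝ A] [ContinuousFunctionalCalculus ℝ A IsSelfAdjoint]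
  [NonnegSpectrumClass ℝ A]

lemma spectrum_subset_Icc_of_nonneg_of_le_one {a : A} (h0 : 0 ≤ a) (h1 : a ≤ 1) :
    spectrum ℝ a ⊆ Set.Icc 0 1 := by
  intro x hx
  refine ⟨(StarOrderedRing.nonneg_iff_spectrum_nonneg a).mp h0 x hx, ?_⟩
  rw [← map_one (algebraMap ℝ A)] at h1
  exact (le_algebraMap_iff_spectrum_le (r := (1 : ℝ))).mp h1 x hx

lemma cfc_sqrt_mul_self {a : A} (ha : 0 ≤ a) : cfc Real.sqrt a * cfc Real.sqrt a = a := by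
  have hsa : IsSelfAdjoint a := ha.isSelfAdjoint
  rw [← cfc_mul Real.sqrt Real.sqrt a]
  conv_rhs => rw [← cfc_id' ℝ a]
  refine cfc_congr fun x hx => Real.mul_self_sqrt ?_
  exact (StarOrderedRing.nonneg_iff_spectrum_nonneg a).mp ha x hx

lemma one_sub_cfc_sqrt_mul_self_le {a : A} (h0 : 0 ≤ a) (h1 : a ≤ 1) :
    (1 - cfc Real.sqrt a) * (1 - cfc Real.sqrt a) ≤ 1 - a := by
  have hsa : IsSelfAdjoint a := h0.isSelfAdjoint
  have hlhs : (1 - cfc Real.sqrt a) * (1 - cfc Real.sqrt a) =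
      cfc (fun x => (1 - √x) * (1 - √x)) a := by
    rw [cfc_mul (fun x => 1 - √x) (fun x => 1 - √x) a, cfc_sub (fun _ : ℝ => 1) Real.sqrt a,
      cfc_const_one ℝ a]
  have hrhs : 1 - a = cfc (fun x : ℝ => 1 - x) a := by
    rw [cfc_sub (fun _ : ℝ => 1) (fun x : ℝ => x) a, cfc_const_one ℝ a, cfc_id' ℝ a]
  rw [hlhs, hrhs]
  refine cfc_mono fun x hx => ?_
  obtain ⟨hx0, hx1⟩ := spectrum_subset_Icc_of_nonneg_of_le_one h0 h1 hx
  have hsq : √x * √x = x := Real.mul_self_sqrt hx0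
  have hle : x ≤ √x := Real.le_sqrt_of_sq_le (by nlinarith)
  nlinarith

end CFC

namespace Matrix

variable {n 𝕜 : Type*} [Fintype n] [RCLike 𝕜]

lemma norm_trace_mul_mul_conjTranspose_le {ρ : Matrix n n 𝕜} (hρ : ρ.PosSemidef)
    (X Y : Matrix n n 𝕜) :
    ‖(Y * ρ * Xᴴ).trace‖ ≤
      √(RCLike.re (X * ρ * Xᴴ).trace) * √(RCLike.re (Y * ρ * Yᴴ).trace) :=
  let _ := ρ.toMatrixSeminormedAddCommGroup hρ
  let _ := ρ.toMatrixInnerProductSpace hρ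
  norm_inner_le_norm (𝕜 := 𝕜) X Y

lemma PosSemidef.re_trace_mul_le_of_le {ρ P Q : Matrix n n 𝕜} (hρ : ρ.PosSemidef) (h : P ≤ Q) :
    RCLike.re (P * ρ).trace ≤ RCLike.re (Q * ρ).trace := by
  classical
  obtain ⟨B, hB⟩ := CStarAlgebra.nonneg_iff_eq_star_mul_self.mp (sub_nonneg.mpr h)
  have hBρB : 0 ≤ (B * ρ * Bᴴ).trace := (hρ.mul_mul_conjTranspose_same B).trace_nonneg
  have hsub : (Q * ρ).trace - (P * ρ).trace = (B * ρ * Bᴴ).trace := by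
    rw [← trace_sub, ← sub_mul, hB, star_eq_conjTranspose, mul_assoc, trace_mul_comm, mul_assoc]
  have hre := (RCLike.nonneg_iff.mp (hsub ▸ hBρB)).1
  rw [map_sub] at hre
  linarith

variable [DecidableEq n]

lemma PosSemidef.sqrt_eq_cfc {A : Matrix n n 𝕜} (hA : A.PosSemidef) :
    hA.sqrt = cfc Real.sqrt A := by
  rw [hA.1.cfc_eq, IsHermitian.cfc, Unitary.conjStarAlgAut_apply]
  rfl

lemma IsHermitian.trace_cfc {A : Matrix n n 𝕜} (hA : A.IsHermitian) (f : ℝ → ℝ) :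
    (cfc f A).trace = ∑ i, (f (hA.eigenvalues i) : 𝕜) := by
  rw [hA.cfc_eq, IsHermitian.cfc, Unitary.conjStarAlgAut_apply, trace_mul_cycle,
    Unitary.coe_star_mul_self, one_mul, trace_diagonal]
  rfl

lemma IsHermitian.exists_unitary_trace_mul_eq_sum_abs {A : Matrix n n 𝕜}
    (hA : A.IsHermitian) :
    ∃ C : Matrix n n 𝕜, Cᴴ * C = 1 ∧
      (C * A).trace = ∑ i, ((|hA.eigenvalues i| : ℝ) : 𝕜) := by
  have hcont (f : ℝ → ℝ) : ContinuousOn f (spectrum ℝ A) := A.finite_real_spectrum.continuousOn f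
  let sign : ℝ → ℝ := fun x => if 0 ≤ x then 1 else -1
  refine ⟨cfc sign A, ?_, ?_⟩
  · have hsign : (cfc sign A)ᴴ = cfc sign A := cfc_predicate sign A
    rw [hsign, ← cfc_mul sign sign A (hcont _) (hcont _)]
    convert cfc_const_one ℝ A with x
    by_cases hx : 0 ≤ x <;> simp [sign, hx]
  · have hsignA : cfc sign A * A = cfc (fun x => sign x * x) A := by
      rw [cfc_mul sign (fun x => x) A (hcont _) (hcont _), cfc_id' ℝ A]
    rw [hsignA, hA.trace_cfc]
    congr! 2 with i
    by_cases hx : 0 ≤ hA.eigenvalues i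
    · simp [sign, hx, abs_of_nonneg hx]
    · simp [sign, hx, abs_of_neg (not_le.mp hx)]

lemma IsHermitian.sum_abs_eigenvalues_le_of_eq_sub_mul_mul_conjTranspose {ρ S A : Matrix n n 𝕜}
    (hρ : ρ.PosSemidef) (hA : A.IsHermitian) (hAρ : A = ρ - S * ρ * Sᴴ) :
    ∑ i, |hA.eigenvalues i| ≤ (√(RCLike.re ρ.trace) + √(RCLike.re (S * ρ * Sᴴ).trace)) *
      √(RCLike.re ((1 - S) * ρ * (1 - S)ᴴ).trace) := by
  obtain ⟨C, hC, hCA⟩ := hA.exists_unitary_trace_mul_eq_sum_abs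
  have hsum : ∑ i, |hA.eigenvalues i| = RCLike.re (C * A).trace := by
    rw [hCA, ← RCLike.ofReal_sum, RCLike.ofReal_re]
  have hsplit : (C * A).trace = (C * ρ * (1 - S)ᴴ).trace + (C * (1 - S) * ρ * Sᴴ).trace := by
    rw [← trace_add, hAρ, conjTranspose_sub, conjTranspose_one]
    noncomm_ring
  have hCρC : (C * ρ * Cᴴ).trace = ρ.trace := by
    rw [trace_mul_cycle, hC, one_mul]
  have hC1S : (C * (1 - S) * ρ * (C * (1 - S))ᴴ).trace = ((1 - S) * ρ * (1 - S)ᴴ).trace := by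
    rw [conjTranspose_mul, show C * (1 - S) * ρ * ((1 - S)ᴴ * Cᴴ) =
      C * ((1 - S) * ρ * (1 - S)ᴴ) * Cᴴ by simp only [mul_assoc], trace_mul_cycle, hC, one_mul]
  have h1 := norm_trace_mul_mul_conjTranspose_le hρ (1 - S) C
  have h2 := norm_trace_mul_mul_conjTranspose_le hρ S (C * (1 - S))
  rw [hCρC] at h1
  rw [hC1S] at h2
  rw [hsum, hsplit, map_add]
  nlinarith [RCLike.re_le_norm (C * ρ * (1 - S)ᴴ).trace,
    RCLike.re_le_norm (C * (1 - S) * ρ * Sᴴ).trace]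

end Matrix

theorem gentle_measurement_lemma_general
    (d : ℕ) (ρ Λ : Matrix (Fin d) (Fin d) ℂ)
    (hρ : ρ.PosSemidef) (hτ : ρ.trace = 1)
    (hΛ : Λ.PosSemidef) (hΛ' : (1 - Λ).PosSemidef)
    (ε : ℝ)
    (hsucc : 1 - ε ≤ ((Λ * ρ).trace).re)
    (A : Matrix (Fin d) (Fin d) ℂ)
    (hA : A = ρ - hΛ.sqrt * ρ * hΛ.sqrt)
    (hAh : A.IsHermitian) :
    ∑ i, |hAh.eigenvalues i| ≤ 2 * Real.sqrt ε := by
  set S := hΛ.sqrt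
  have hΛ1 : Λ ≤ 1 := Matrix.le_iff.mpr hΛ'
  have hS : S = cfc Real.sqrt Λ := hΛ.sqrt_eq_cfc
  have hSh : Sᴴ = S := hS ▸ cfc_predicate Real.sqrt Λ
  have hSρS : (S * ρ * Sᴴ).trace = (Λ * ρ).trace := by
    rw [hSh, trace_mul_cycle, hS, cfc_sqrt_mul_self hΛ.nonneg]
  have hΛρ : RCLike.re (Λ * ρ).trace ≤ 1 := by
    simpa [hτ] using hρ.re_trace_mul_le_of_le hΛ1
  have hq : RCLike.re ((1 - S) * ρ * (1 - S)ᴴ).trace ≤ ε := calc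
    _ = RCLike.re ((1 - S) * (1 - S) * ρ).trace := by
      rw [conjTranspose_sub, conjTranspose_one, hSh, trace_mul_cycle]
    _ ≤ RCLike.re ((1 - Λ) * ρ).trace :=
      hρ.re_trace_mul_le_of_le (hS ▸ one_sub_cfc_sqrt_mul_self_le hΛ.nonneg hΛ1)
    _ = 1 - (Λ * ρ).trace.re := by simp [sub_mul, hτ]
    _ ≤ ε := by linarith
  have hbound := hAh.sum_abs_eigenvalues_le_of_eq_sub_mul_mul_conjTranspose hρ
    (show A = ρ - S * ρ * Sᴴ by rw [hSh]; exact hA)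
  rw [hSρS, hτ] at hbound
  refine hbound.trans ?_
  calc (√(RCLike.re (1 : ℂ)) + √(RCLike.re (Λ * ρ).trace)) *
        √(RCLike.re ((1 - S) * ρ * (1 - S)ᴴ).trace)
      ≤ (1 + 1) * √ε := by
        gcongr
        · simp
        · exact Real.sqrt_le_one.mpr hΛρ
    _ = 2 * √ε := by ring

/-- Gentle measurement lemma: if `0 ≤ Λ ≤ I` and `tr(Λρ) ≥ 1 - ε` for a density matrix `ρ`,
then the trace norm of `ρ - √Λ ρ √Λ` is at most `2√ε`. -/
theorem gentle_measurement_lemma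
    (d : ℕ) (ρ Λ : Matrix (Fin d) (Fin d) ℂ)
    (hρ : ρ.PosSemidef) (hτ : ρ.trace = 1)
    (hΛ : Λ.PosSemidef) (hΛ' : (1 - Λ).PosSemidef)
    (ε : ℝ) (hε0 : 0 ≤ ε) (hε1 : ε ≤ 1)
    (hsucc : 1 - ε ≤ ((Λ * ρ).trace).re)
    (A : Matrix (Fin d) (Fin d) ℂ)
    (hA : A = ρ - hΛ.sqrt * ρ * hΛ.sqrt)
    (hAh : A.IsHermitian) :
    ∑ i, |hAh.eigenvalues i| ≤ 2 * Real.sqrt ε :=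
  gentle_measurement_lemma_general d ρ Λ hρ hτ hΛ hΛ' ε hsucc A hA hAh
end

section
/- (Polarization of the limit.) Let (Ω, 𝓕, P) be a probability space with a filtration (𝓕_n)_{n≥0} and let (X_n)_{n≥0} be an adapted real-valued process with 0 ≤ X_n ≤ 1 for all n. Suppose there are events B_n ∈ 𝓕_{n+1} with P(B_n | 𝓕_n) = 1/2 almost surely such that X_{n+1} = X_n² almost surely on B_n. If X_n converges almost surely to a limit X_∞, then X_∞ ∈ {0, 1} almost surely, i.e. X_∞ (1 - X_∞) = 0 almost surely. -/
open MeasureTheory Filter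

/-- Polarization of the limit: a `[0,1]`-valued adapted process that squares with conditional
probability `1/2` and converges a.s. has a limit in `{0, 1}` almost surely. -/
theorem polarization_limit_zero_one
    {Ω : Type*} {m0 : MeasurableSpace Ω} (μ : Measure Ω) [IsProbabilityMeasure μ]
    (ℱ : Filtration ℕ m0)
    (X : ℕ → Ω → ℝ) (hadapt : Adapted ℱ X)
    (hbdd : ∀ n, ∀ᵐ ω ∂μ, 0 ≤ X n ω ∧ X n ω ≤ 1)
    (B : ℕ → Set Ω) (hB : ∀ n, MeasurableSet[ℱ (n + 1)] (B n))
    (hcond : ∀ n, μ[(B n).indicator (fun _ => (1 : ℝ)) | ℱ n] =ᵐ[μ] fun _ => 1 / 2)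
    (hsq : ∀ n, ∀ᵐ ω ∂μ, ω ∈ B n → X (n + 1) ω = (X n ω) ^ 2)
    (Xinf : Ω → ℝ)
    (hconv : ∀ᵐ ω ∂μ, Tendsto (fun n => X n ω) atTop (nhds (Xinf ω))) :
    ∀ᵐ ω ∂μ, Xinf ω * (1 - Xinf ω) = 0 := by
  -- shifted sequence of sets, adapted to ℱ
  set s : ℕ → Set Ω := fun n => Nat.rec ∅ (fun k _ => B k) n with hs_def
  have hs : ∀ n, MeasurableSet[ℱ n] (s n) := by
    intro n
    cases n with
    | zero => exact @MeasurableSet.empty _ (ℱ 0)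
    | succ k => exact hB k
  -- B_n happens infinitely often a.s.
  have hio : ∀ᵐ ω ∂μ, ∃ᶠ n in atTop, ω ∈ B n := by
    have hlim := ae_mem_limsup_atTop_iff μ hs
    have hcond' : ∀ᵐ ω ∂μ, ∀ k,
        (μ[(s (k + 1)).indicator (1 : Ω → ℝ)|ℱ k]) ω = 1 / 2 := by
      rw [MeasureTheory.ae_all_iff]
      intro k
      exact hcond k
    filter_upwards [hlim, hcond'] with ω hω hω2
    have htend : Tendsto (fun n => ∑ k ∈ Finset.range n,
        (μ[(s (k + 1)).indicator (1 : Ω → ℝ)|ℱ k]) ω) atTop atTop := by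
      have : (fun n => ∑ k ∈ Finset.range n,
          (μ[(s (k + 1)).indicator (1 : Ω → ℝ)|ℱ k]) ω)
          = fun n : ℕ => (n : ℝ) / 2 := by
        funext n
        rw [Finset.sum_congr rfl fun k _ => hω2 k]
        simp [div_eq_mul_inv]
      rw [this]
      exact (tendsto_natCast_atTop_atTop (R := ℝ)).atTop_div_const (by norm_num)
    have hmem : ω ∈ limsup s atTop := hω.mpr htend
    rw [Filter.mem_limsup_iff_frequently_mem] at hmem
    rw [frequently_atTop] at hmem ⊢
    intro a
    obtain ⟨n, hn, hns⟩ := hmem (a + 1)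
    obtain ⟨m, rfl⟩ : ∃ m, n = m + 1 := ⟨n - 1, by omega⟩
    exact ⟨m, by omega, hns⟩
  have hsq' : ∀ᵐ ω ∂μ, ∀ n, ω ∈ B n → X (n + 1) ω = (X n ω) ^ 2 :=
    (MeasureTheory.ae_all_iff).2 hsq
  filter_upwards [hio, hsq', hconv] with ω hωio hωsq hωconv
  -- g n := X n ω ^ 2 - X (n+1) ω tends to L^2 - L and is frequently 0
  have h1 : Tendsto (fun n => (X n ω) ^ 2 - X (n + 1) ω) atTop
      (nhds (Xinf ω ^ 2 - Xinf ω)) :=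
    ((hωconv.pow 2).sub (hωconv.comp (tendsto_add_atTop_nat 1)))
  have h2 : ∃ᶠ n in atTop, (X n ω) ^ 2 - X (n + 1) ω ∈ ({0} : Set ℝ) := by
    refine hωio.mono fun n hn => ?_
    simp [hωsq n hn]
  have := mem_closure_of_frequently_of_tendsto h2 h1
  rw [closure_singleton, Set.mem_singleton_iff] at this
  nlinarith [this]
end

section
/- (Leading-order photon efficiency of the BPSK Holevo capacity.) Let h be the binary entropy function in nats, h(x) = -x ln x - (1-x) ln(1-x) with 0 ln 0 = 0, and let C∞(E) = h((1 + e^{-2E})/2) be the BPSK Holevo capacity in nats per symbol. Then lim_{E → 0⁺} [ C∞(E)/E + ln E ] = 1, i.e. the Holevo photon efficiency of BPSK satisfies C∞(E)/E = -ln E + 1 + o(1) nats per photon as E → 0⁺. -/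
/-!
With `p = (1 + e^{-2E})/2` and `q = 1 - p = (1 - e^{-2E})/2`, write `h(p) = η(p) + η(q)` with
`η(x) = -x ln x`. Since `η(q) = E η(q/E) - q ln E`,
`h(p)/E + ln E = η(p)/E + η(q/E) + (1 - q/E) ln E`.
As `E → 0⁺`, `η(p)/E → (η ∘ p)'(0) = 1` and `q/E → q'(0) = 1`, so `η(q/E) → η(1) = 0`;
finally `1 - q/E = O(E)`, so the last term is `O(E ln E) → 0`.
-/

open Filter Topology Real Asymptotics

lemma tendsto_div_self_nhdsGT_zero_of_hasDerivAt {f : ℝ → ℝ} {d : ℝ}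
    (hf : HasDerivAt f d 0) (h0 : f 0 = 0) :
    Tendsto (fun x => f x / x) (𝓝[>] 0) (𝓝 d) :=
  hf.tendsto_slope_zero_right.congr fun x => by simp [h0, div_eq_inv_mul]

lemma tendsto_mul_log_nhdsGT_zero_of_isBigO {g : ℝ → ℝ} (hg : g =O[𝓝[>] 0] id) :
    Tendsto (fun x => g x * log x) (𝓝[>] 0) (𝓝 0) := by
  have hxlogx : Tendsto (fun x => x * log x) (𝓝[>] 0) (𝓝 0) := by
    simpa using continuous_mul_log.continuousAt.tendsto.mono_left (nhdsWithin_le_nhds (a := 0))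
  exact (hg.mul (isBigO_refl log _)).trans_tendsto hxlogx

lemma binEntropy_div_add_log {p q x : ℝ} (hpq : p + q = 1) (hx : x ≠ 0) :
    binEntropy p / x + log x = negMulLog p / x + negMulLog (q / x) + (1 - q / x) * log x := by
  have hq : negMulLog q = x * negMulLog (q / x) - q * log x := by
    conv_lhs => rw [← div_mul_cancel₀ q hx, negMulLog_mul]
    simp only [negMulLog]
    field_simp
    ring
  rw [binEntropy_eq_negMulLog_add_negMulLog_one_sub, show 1 - p = q by linarith, hq]
  field_simp
  ring

lemma hasDerivAt_one_add_exp_neg_two_mul_div_two :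
    HasDerivAt (fun E : ℝ => (1 + exp (-(2 * E))) / 2) (-1) 0 := by
  simpa using ((((hasDerivAt_id (0 : ℝ)).const_mul 2).neg.exp).const_add 1).div_const 2

lemma hasDerivAt_one_sub_exp_neg_two_mul_div_two :
    HasDerivAt (fun E : ℝ => (1 - exp (-(2 * E))) / 2) 1 0 := by
  simpa using ((((hasDerivAt_id (0 : ℝ)).const_mul 2).neg.exp).const_sub 1).div_const 2

lemma abs_one_sub_exp_neg_two_mul_div_two_sub_le {E : ℝ} (hE : |E| ≤ 1 / 2) :
    |(1 - exp (-(2 * E))) / 2 - E| ≤ 2 * E ^ 2 := by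
  have hTaylor : |exp (-(2 * E)) - 1 - -(2 * E)| ≤ (-(2 * E)) ^ 2 :=
    abs_exp_sub_one_sub_id_le (by rw [abs_neg, abs_mul]; norm_num; linarith)
  rw [show (1 - exp (-(2 * E))) / 2 - E = -(exp (-(2 * E)) - 1 - -(2 * E)) / 2 by ring,
    abs_div, abs_neg, abs_two]
  linarith

lemma isBigO_one_sub_one_sub_exp_neg_two_mul_div_two_div :
    (fun E : ℝ => 1 - (1 - exp (-(2 * E))) / 2 / E) =O[𝓝[>] 0] id := by
  refine IsBigO.of_bound 2 ?_
  filter_upwards [Ioo_mem_nhdsGT (by norm_num : (0 : ℝ) < 1 / 2)] with E ⟨hE, hE'⟩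
  have hTaylor := abs_one_sub_exp_neg_two_mul_div_two_sub_le (abs_le.2 ⟨by linarith, hE'.le⟩)
  rw [show 1 - (1 - exp (-(2 * E))) / 2 / E = -(((1 - exp (-(2 * E))) / 2 - E) / E) by
      field_simp; ring]
  simp only [id, norm_neg, norm_div, Real.norm_eq_abs, abs_of_pos hE]
  rw [div_le_iff₀ hE]
  nlinarith

/-- Leading-order photon efficiency of the BPSK Holevo capacity
`C∞(E) = h((1 + e^{-2E})/2)`: `C∞(E)/E + ln E → 1` as `E → 0⁺`. -/
theorem bpsk_holevo_photon_efficiency_leading_order :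
    Tendsto
      (fun E : ℝ =>
        Real.binEntropy ((1 + Real.exp (-(2 * E))) / 2) / E + Real.log E)
      (𝓝[>] 0) (𝓝 1) := by
  have hp : Tendsto (fun E : ℝ => negMulLog ((1 + exp (-(2 * E))) / 2) / E) (𝓝[>] 0) (𝓝 1) := by
    refine tendsto_div_self_nhdsGT_zero_of_hasDerivAt ?_ (by norm_num)
    simpa [Function.comp_def] using (hasDerivAt_negMulLog one_ne_zero).comp_of_eq (0 : ℝ)
      hasDerivAt_one_add_exp_neg_two_mul_div_two (by norm_num)
  have hq : Tendsto (fun E : ℝ => negMulLog ((1 - exp (-(2 * E))) / 2 / E)) (𝓝[>] 0) (𝓝 0) := by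
    simpa [Function.comp_def] using continuous_negMulLog.continuousAt.tendsto.comp
      (tendsto_div_self_nhdsGT_zero_of_hasDerivAt hasDerivAt_one_sub_exp_neg_two_mul_div_two
        (by norm_num))
  have hlog := tendsto_mul_log_nhdsGT_zero_of_isBigO
    isBigO_one_sub_one_sub_exp_neg_two_mul_div_two_div
  refine ((hp.add hq).add hlog).congr' ?_ |>.trans (by norm_num)
  filter_upwards [self_mem_nhdsWithin] with E (hE : 0 < E)
  exact (binEntropy_div_add_log (by ring) hE.ne').symm
end

section
/- (Photon-efficiency cap for single-symbol BPSK detection.) Let h(x) = -x ln x - (1-x) ln(1-x) (binary entropy in nats, 0 ln 0 = 0), and let C₁(E) = ln 2 - h( (1 - √(1 - e^{-4E}))/2 ) be the Shannon capacity in nats per symbol of the binary symmetric channel induced by the minimum-error single-symbol measurement (Dolinar receiver) on BPSK coherent states with mean photon number E. Then lim_{E → 0⁺} C₁(E)/E = 2, i.e. the photon efficiency of BPSK with optimal symbol-by-symbol detection caps off at 2 nats per photon as E → 0⁺. -/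
/-!
Put `s = √(1 - e^{-4E})`. Then `C₁(E) = ((1 + s) log (1 + s) + (1 - s) log (1 - s)) / 2`, whose
numerator behaves like `s²` as `s → 0` (by l'Hôpital, its derivative `log (1 + s) - log (1 - s)`
behaves like `2 s`), while `s² = 1 - e^{-4E}` behaves like `4 E`. Hence `C₁(E) / E → 4 / 2 = 2`.
-/

open Filter Topology Real

lemma log_two_sub_binEntropy_one_sub_div_two (s : ℝ) :
    log 2 - binEntropy ((1 - s) / 2) = ((1 + s) * log (1 + s) + (1 - s) * log (1 - s)) / 2 := by
  rcases eq_or_ne (1 - s) 0 with h₁ | h₁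
  · obtain rfl : s = 1 := by linarith
    norm_num
  rcases eq_or_ne (1 + s) 0 with h₂ | h₂
  · obtain rfl : s = -1 := by linarith
    norm_num
  have h : 1 - (1 - s) / 2 = (1 + s) / 2 := by ring
  rw [binEntropy, log_inv, log_inv, h, log_div h₁ two_ne_zero, log_div h₂ two_ne_zero]
  ring

lemma HasDerivAt.tendsto_div_self_nhdsNE {f : ℝ → ℝ} {f' : ℝ} (hf : HasDerivAt f f' 0)
    (h₀ : f 0 = 0) : Tendsto (fun x => f x / x) (𝓝[≠] 0) (𝓝 f') := by
  simpa [h₀, div_eq_inv_mul] using hf.tendsto_slope_zero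

lemma tendsto_log_one_add_sub_log_one_sub_div_self :
    Tendsto (fun s => (log (1 + s) - log (1 - s)) / s) (𝓝[≠] 0) (𝓝 2) := by
  have hplus : HasDerivAt (fun s : ℝ => log (1 + s)) 1 0 := by
    simpa using ((hasDerivAt_id (0 : ℝ)).const_add 1).log (by norm_num)
  have hminus : HasDerivAt (fun s : ℝ => log (1 - s)) (-1) 0 := by
    simpa using ((hasDerivAt_id (0 : ℝ)).const_sub 1).log (by norm_num)
  have h := (hplus.sub hminus).tendsto_div_self_nhdsNE (by simp)
  norm_num at h
  exact h

lemma tendsto_one_sub_exp_neg_mul_div_self (c : ℝ) :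
    Tendsto (fun x => (1 - exp (-(c * x))) / x) (𝓝[≠] 0) (𝓝 c) := by
  have h : HasDerivAt (fun x => 1 - exp (-(c * x))) c 0 := by
    simpa using (((hasDerivAt_id (0 : ℝ)).const_mul c).neg.exp).const_sub 1
  exact h.tendsto_div_self_nhdsNE (by simp)

lemma tendsto_mul_log_one_add_add_mul_log_one_sub_div_sq :
    Tendsto (fun s => ((1 + s) * log (1 + s) + (1 - s) * log (1 - s)) / s ^ 2)
      (𝓝[≠] 0) (𝓝 1) := by
  have hderiv : ∀ᶠ s in 𝓝[≠] (0 : ℝ), HasDerivAt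
      (fun s => (1 + s) * log (1 + s) + (1 - s) * log (1 - s)) (log (1 + s) - log (1 - s)) s := by
    have hIoo : Set.Ioo (-1 : ℝ) 1 ∈ 𝓝[≠] (0 : ℝ) :=
      mem_nhdsWithin_of_mem_nhds (Ioo_mem_nhds (by norm_num) (by norm_num))
    filter_upwards [hIoo] with s ⟨hs₁, hs₂⟩
    have hp : 1 + s ≠ 0 := by linarith
    have hm : 1 - s ≠ 0 := by linarith
    have hplus : HasDerivAt (fun s : ℝ => 1 + s) 1 s := (hasDerivAt_id s).const_add 1
    have hminus : HasDerivAt (fun s : ℝ => 1 - s) (-1) s := (hasDerivAt_id s).const_sub 1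
    refine ((hplus.mul (hplus.log hp)).add (hminus.mul (hminus.log hm))).congr_deriv ?_
    field_simp
    ring
  have hcont : Continuous fun s : ℝ => (1 + s) * log (1 + s) + (1 - s) * log (1 - s) :=
    (continuous_mul_log.comp (continuous_const.add continuous_id)).add
    (continuous_mul_log.comp (continuous_const.sub continuous_id))
  refine HasDerivAt.lhopital_zero_nhdsNE hderiv
    (Eventually.of_forall fun s => by simpa using hasDerivAt_pow 2 s) ?_ ?_ ?_ ?_
  · filter_upwards [self_mem_nhdsWithin] with s hs
    simpa using hs
  · simpa using (hcont.tendsto 0).mono_left nhdsWithin_le_nhds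
  · simpa using ((continuous_pow 2).tendsto (0 : ℝ)).mono_left nhdsWithin_le_nhds
  · have h := tendsto_log_one_add_sub_log_one_sub_div_self.div_const 2
    norm_num at h
    refine h.congr fun s => ?_
    ring

/-- Photon-efficiency cap for optimal single-symbol BPSK detection:
`C₁(E)/E → 2` nats/photon as `E → 0⁺`, where
`C₁(E) = ln 2 - h((1 - √(1 - e^{-4E}))/2)`. -/
theorem bpsk_single_symbol_photon_efficiency_cap :
    Tendsto
      (fun E : ℝ =>
        (Real.log 2
          - Real.binEntropy ((1 - Real.sqrt (1 - Real.exp (-(4 * E)))) / 2)) / E)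
      (𝓝[>] 0) (𝓝 2) := by
  have hpos : ∀ E : ℝ, 0 < E → 0 < 1 - exp (-(4 * E)) := fun E hE => by
    simpa using exp_lt_one_iff.mpr (by linarith : -(4 * E) < 0)
  have hsqrt : Tendsto (fun E => √(1 - exp (-(4 * E)))) (𝓝[>] 0) (𝓝[≠] 0) := by
    refine tendsto_nhdsWithin_of_tendsto_nhds_of_eventually_within _ ?_ ?_
    · have h : Tendsto (fun E : ℝ => √(1 - exp (-(4 * E)))) (𝓝 0) (𝓝 √(1 - exp (-(4 * 0)))) :=
        (by fun_prop : Continuous fun E : ℝ => √(1 - exp (-(4 * E)))).tendsto 0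
      simpa using h.mono_left nhdsWithin_le_nhds
    · filter_upwards [self_mem_nhdsWithin] with E hE
      exact (sqrt_pos.mpr (hpos E hE)).ne'
  have hlim := ((tendsto_mul_log_one_add_add_mul_log_one_sub_div_sq.comp hsqrt).div_const 2).mul
    ((tendsto_one_sub_exp_neg_mul_div_self 4).mono_left (nhdsGT_le_nhdsNE 0))
  rw [show (1 : ℝ) / 2 * 4 = 2 by norm_num] at hlim
  refine hlim.congr' ?_
  filter_upwards [self_mem_nhdsWithin] with E hE
  have hsq : √(1 - exp (-(4 * E))) ^ 2 = 1 - exp (-(4 * E)) := sq_sqrt (hpos E hE).le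
  simp only [Function.comp_apply, log_two_sub_binEntropy_one_sub_div_two, hsq]
  field_simp [(hpos E hE).ne', (show E ≠ 0 from hE.ne')]
end

section
/- (Leading-order photon efficiency of on-off keying with direct detection.) Let h(x) = -x ln x - (1-x) ln(1-x) (binary entropy in nats, 0 ln 0 = 0), and for E > 0 define C(E) = sup over p ∈ (0, 1] of [ h( p (1 - e^{-E/p}) ) - p · h( e^{-E/p} ) ], the Shannon capacity in nats per symbol of the Z-channel induced by direct detection of the on-off-keying alphabet {|0⟩, |√(E/p)⟩} with on-pulse prior p under the mean-energy constraint p·(E/p) = E. Then lim_{E → 0⁺} C(E) / ( -E ln E ) = 1, i.e. the OOK-direct-detection photon efficiency satisfies C(E)/E = (-ln E)(1 + o(1)) nats per photon as E → 0⁺. -/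
/-!
The click probability of any prior is at most `E`, and `h` is increasing on `[0, 1/2]`, so
`C(E) ≤ h(E) ≤ -E ln E + E`. Conversely, the prior `p = -E ln E` sends pulses of `1/L` photons,
`L = -ln E`; these click with probability `≈ 1/L`, and the bounds `-x ln x ≤ h(x) ≤ -x ln x + x`
give `I(p) ≥ E (L - ln L - 1)(1 + O(1/L))`. Both bounds are `-E ln E (1 + o(1))`.
-/

open Filter Topology Real Set

lemma neg_mul_log_le_binEntropy {u : ℝ} (h0 : 0 ≤ u) (h1 : u ≤ 1) :
    -u * log u ≤ binEntropy u := by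
  rw [binEntropy_eq_negMulLog_add_negMulLog_one_sub, negMulLog]
  linarith [negMulLog_nonneg (sub_nonneg.2 h1) (sub_le_self 1 h0)]

lemma binEntropy_le_neg_mul_log_add_self {u : ℝ} (h1 : u ≤ 1) :
    binEntropy u ≤ -u * log u + u := by
  rw [binEntropy_eq_negMulLog_add_negMulLog_one_sub, negMulLog]
  linarith [negMulLog_le_one_sub_self (sub_nonneg.2 h1)]

lemma div_one_add_le_one_sub_exp_neg {t : ℝ} (ht : 0 ≤ t) : t / (1 + t) ≤ 1 - exp (-t) := by
  have hexp : exp (-t) ≤ (1 + t)⁻¹ := by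
    rw [exp_neg]
    exact inv_anti₀ (by linarith) (by linarith [add_one_le_exp t])
  have hdiv : t / (1 + t) = 1 - (1 + t)⁻¹ := by field_simp; ring
  linarith

noncomputable def ookInformation (E p : ℝ) : ℝ :=
  binEntropy (p * (1 - exp (-(E / p)))) - p * binEntropy (exp (-(E / p)))

noncomputable def ookCapacity (E : ℝ) : ℝ := sSup (ookInformation E '' Ioc 0 1)

lemma ookInformation_le_binEntropy {E p : ℝ} (hE0 : 0 ≤ E) (hE : E ≤ 2⁻¹) (hp : p ∈ Ioc 0 1) :
    ookInformation E p ≤ binEntropy E := by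
  obtain ⟨hp0, hp1⟩ := hp
  have hexp : exp (-(E / p)) ≤ 1 := exp_le_one_iff.2 (neg_nonpos.2 (by positivity))
  have hclick : p * (1 - exp (-(E / p))) ≤ E :=
    calc p * (1 - exp (-(E / p))) ≤ p * (E / p) := by
          gcongr; linarith [one_sub_le_exp_neg (E / p)]
      _ = E := by field_simp
  have hmono : binEntropy (p * (1 - exp (-(E / p)))) ≤ binEntropy E :=
    binEntropy_strictMonoOn.monotoneOn ⟨by nlinarith, hclick.trans hE⟩ ⟨hE0, hE⟩ hclick
  have hnoise : 0 ≤ p * binEntropy (exp (-(E / p))) :=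
    mul_nonneg hp0.le (binEntropy_nonneg (exp_nonneg _) hexp)
  rw [ookInformation]
  linarith

/-- The `log q` terms of `-pq log(pq)` and `p · (-q log q + q)` cancel. -/
lemma mul_neg_log_sub_one_le_ookInformation {E p : ℝ} (hE0 : 0 < E) (hp : p ∈ Ioc 0 1) :
    p * (1 - exp (-(E / p))) * (-log p - 1) ≤ ookInformation E p := by
  obtain ⟨hp0, hp1⟩ := hp
  set q := 1 - exp (-(E / p)) with hq
  have hq0 : 0 < q := by
    rw [hq, sub_pos, exp_lt_one_iff, neg_lt_zero]; positivity
  have hq1 : q ≤ 1 := by rw [hq]; linarith [exp_pos (-(E / p))]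
  have hclick := neg_mul_log_le_binEntropy (mul_pos hp0 hq0).le (mul_le_one₀ hp1 hq0.le hq1)
  have hnoise := binEntropy_le_neg_mul_log_add_self hq1
  have hoff : exp (-(E / p)) = 1 - q := by rw [hq]; ring
  rw [ookInformation, ← hq, hoff, binEntropy_one_sub]
  rw [log_mul hp0.ne' hq0.ne'] at hclick
  nlinarith [mul_le_mul_of_nonneg_left hnoise hp0.le]

lemma ookInformation_le_ookCapacity {E p : ℝ} (hE0 : 0 ≤ E) (hE : E ≤ 2⁻¹) (hp : p ∈ Ioc 0 1) :
    ookInformation E p ≤ ookCapacity E :=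
  le_csSup ⟨binEntropy E, forall_mem_image.2 fun _ hq => ookInformation_le_binEntropy hE0 hE hq⟩
    (mem_image_of_mem _ hp)

lemma ookCapacity_le_binEntropy {E : ℝ} (hE0 : 0 ≤ E) (hE : E ≤ 2⁻¹) :
    ookCapacity E ≤ binEntropy E :=
  csSup_le ((nonempty_Ioc.2 zero_lt_one).image _)
    (forall_mem_image.2 fun _ hp => ookInformation_le_binEntropy hE0 hE hp)

lemma ookCapacity_div_le {E : ℝ} (hE0 : 0 < E) (hE : E ≤ 2⁻¹) :
    ookCapacity E / (-(E * log E)) ≤ 1 + (-log E)⁻¹ := by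
  have hlog : log E < 0 := log_neg hE0 (by linarith)
  rw [div_le_iff₀ (by nlinarith)]
  calc ookCapacity E ≤ binEntropy E := ookCapacity_le_binEntropy hE0.le hE
    _ ≤ -E * log E + E := binEntropy_le_neg_mul_log_add_self (by linarith)
    _ = (1 + (-log E)⁻¹) * -(E * log E) := by field_simp [hlog.ne]; ring

lemma ookCapacity_div_ge {E : ℝ} (hE0 : 0 < E) (hE : E ≤ 2⁻¹) :
    (1 - log (-log E) / (-log E) - (-log E)⁻¹) / (1 + (-log E)⁻¹) ≤
      ookCapacity E / (-(E * log E)) := by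
  obtain ⟨L, hL0, hlogE⟩ : ∃ L, 0 < L ∧ log E = -L :=
    ⟨-log E, neg_pos.2 (log_neg hE0 (by linarith)), (neg_neg _).symm⟩
  have hp : E * L ∈ Ioc 0 1 := by
    refine ⟨mul_pos hE0 hL0, ?_⟩
    have := negMulLog_le_one_sub_self hE0.le
    rw [negMulLog, hlogE] at this
    linarith
  have hlogp : -log (E * L) - 1 = L - log L - 1 := by
    rw [log_mul hE0.ne' hL0.ne', hlogE]; ring
  rw [hlogE, neg_neg, mul_neg, neg_neg, le_div_iff₀ (mul_pos hE0 hL0)]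
  calc (1 - log L / L - L⁻¹) / (1 + L⁻¹) * (E * L)
      = E * L * (L⁻¹ / (1 + L⁻¹)) * (L - log L - 1) := by field_simp
    _ ≤ E * L * (1 - exp (-(E / (E * L)))) * (-log (E * L) - 1) := by
        have hpulse : E / (E * L) = L⁻¹ := by field_simp
        rw [hpulse, hlogp]
        gcongr
        · linarith [log_le_sub_one_of_pos hL0]
        · exact div_one_add_le_one_sub_exp_neg (inv_nonneg.2 hL0.le)
    _ ≤ ookInformation E (E * L) := mul_neg_log_sub_one_le_ookInformation hE0 hp
    _ ≤ ookCapacity E := ookInformation_le_ookCapacity hE0.le hE hp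

lemma tendsto_one_add_inv_atTop : Tendsto (fun L : ℝ => 1 + L⁻¹) atTop (𝓝 1) := by
  simpa using tendsto_inv_atTop_zero.const_add (1 : ℝ)

lemma tendsto_one_sub_log_div_sub_inv_div_atTop :
    Tendsto (fun L : ℝ => (1 - log L / L - L⁻¹) / (1 + L⁻¹)) atTop (𝓝 1) := by
  have hlog : Tendsto (fun L : ℝ => log L / L) atTop (𝓝 0) :=
    isLittleO_log_id_atTop.tendsto_div_nhds_zero
  have h := ((hlog.const_sub 1).sub tendsto_inv_atTop_zero).div tendsto_one_add_inv_atTop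
    one_ne_zero
  rwa [sub_zero, sub_zero, div_one] at h

/-- Leading-order photon efficiency of on-off keying with direct detection:
`C(E)/(-E ln E) → 1` as `E → 0⁺`, where
`C(E) = sup_{p ∈ (0,1]} [h(p(1 - e^{-E/p})) - p·h(e^{-E/p})]`. -/
theorem ook_direct_detection_photon_efficiency_leading_order :
    Tendsto
      (fun E : ℝ =>
        sSup ((fun p : ℝ =>
            Real.binEntropy (p * (1 - Real.exp (-(E / p))))
              - p * Real.binEntropy (Real.exp (-(E / p)))) '' Set.Ioc 0 1)
          / (-(E * Real.log E)))
      (𝓝[>] 0) (𝓝 1) := by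
  have hL : Tendsto (fun E : ℝ => -log E) (𝓝[>] 0) atTop :=
    tendsto_neg_atBot_atTop.comp tendsto_log_nhdsGT_zero
  refine tendsto_of_tendsto_of_tendsto_of_le_of_le'
    (tendsto_one_sub_log_div_sub_inv_div_atTop.comp hL) (tendsto_one_add_inv_atTop.comp hL) ?_ ?_ <;>
  filter_upwards [Ioc_mem_nhdsGT (show (0 : ℝ) < 2⁻¹ by norm_num)] with E ⟨hE0, hE⟩
  exacts [ookCapacity_div_ge hE0 hE, ookCapacity_div_le hE0 hE]
end
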